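/- arXiv:2403.07181 — 2 statements merged into one kernel-verified Lean document; each statement's English description precedes it below -/
import Mathlib

section
/- The number of up-down alternating permutations in S_n with exactly k big returns equals the number of linear extensions of the naturally labeled zig-zag poset εZ_n with exactly k descents. -/
/-- Cover relations of the zig-zag poset `Z_n` (0-indexed): `a` below `b` iff `a` is at an
even 0-indexed position and `b` is adjacent; in 1-indexed terms, `2i-1 < 2i > 2i+1`. -/
def ZigZagCover (n : ℕ) (a b : Fin n) : Prop :=
  a.val % 2 = 0 ∧ (b.val = a.val + 1 ∨ a.val = b.val + 1)

/-- `u` is an up-down alternating permutation: `u(1) < u(2) > u(3) < ⋯`. -/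
def IsUpDownAlt {n : ℕ} (u : Equiv.Perm (Fin n)) : Prop :=
  ∀ (i : ℕ) (h : i + 1 < n),
    (i % 2 = 0 → u ⟨i, Nat.lt_of_succ_lt h⟩ < u ⟨i + 1, h⟩) ∧
    (i % 2 = 1 → u ⟨i + 1, h⟩ < u ⟨i, Nat.lt_of_succ_lt h⟩)

/-- The permutation `ε` (0-indexed): swaps each odd `k` with `k+1` when `k+1 < n`. -/
def epsf (n : ℕ) (k : Fin n) : Fin n :=
  ⟨if k.val % 2 = 1 ∧ k.val + 1 < n then k.val + 1
   else if k.val % 2 = 0 ∧ k.val ≠ 0 then k.val - 1 else k.val, by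
    split_ifs with h1 h2
    · exact h1.2
    · exact lt_of_le_of_lt (Nat.sub_le _ _) k.isLt
    · exact k.isLt⟩

theorem epsf_invol (n : ℕ) : Function.Involutive (epsf n) := by
  rintro ⟨v, hv⟩
  apply Fin.ext
  simp only [epsf]
  split_ifs <;> omega

def epsPerm (n : ℕ) : Equiv.Perm (Fin n) :=
  Function.Involutive.toPerm (epsf n) (epsf_invol n)

/-- The descent set `Des(w) = {i : w(i) > w(i+1)}`. -/
def desSetOf (n : ℕ) (w : Fin n → Fin n) : Set ℕ :=
  {i | ∃ h : i + 1 < n, w ⟨i + 1, h⟩ < w ⟨i, Nat.lt_of_succ_lt h⟩}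

/-- The big-descent set `Des₁(w) = {i : w(i) > w(i+1) + 1}`. -/
def bigDesSetOf (n : ℕ) (w : Fin n → Fin n) : Set ℕ :=
  {i | ∃ h : i + 1 < n, (w ⟨i + 1, h⟩).val + 1 < (w ⟨i, Nat.lt_of_succ_lt h⟩).val}

-- auxiliary lemmas
lemma epsPerm_apply (n : ℕ) (x : Fin n) : epsPerm n x = epsf n x := rfl

lemma epsPerm_inv (n : ℕ) : (epsPerm n)⁻¹ = epsPerm n := rfl

lemma epsPerm_epsPerm (n : ℕ) (x : Fin n) : epsPerm n (epsPerm n x) = x := epsf_invol n x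

lemma mulinv_apply (n : ℕ) (u : Equiv.Perm (Fin n)) (a : Fin n) :
    (epsPerm n * u⁻¹)⁻¹ (epsPerm n a) = u a := by
  simp [mul_inv_rev, epsPerm_inv, epsPerm_epsPerm]

lemma linext_iff (n : ℕ) (u : Equiv.Perm (Fin n)) :
    (∀ a b : Fin n, ZigZagCover n a b →
      (epsPerm n * u⁻¹)⁻¹ (epsPerm n a) < (epsPerm n * u⁻¹)⁻¹ (epsPerm n b)) ↔
    IsUpDownAlt u := by
  simp only [mulinv_apply]
  constructor
  · intro hmon i h
    constructor
    · intro hpar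
      have := hmon ⟨i, Nat.lt_of_succ_lt h⟩ ⟨i + 1, h⟩ ⟨hpar, Or.inl rfl⟩
      exact this
    · intro hpar
      have := hmon ⟨i + 1, h⟩ ⟨i, Nat.lt_of_succ_lt h⟩
        ⟨show (i + 1) % 2 = 0 by omega, Or.inr rfl⟩
      exact this
  · rintro halt a b ⟨hpar, hb | hb⟩
    · have h : a.val + 1 < n := by omega
      have := (halt a.val h).1 hpar
      have hb' : b = ⟨a.val + 1, h⟩ := Fin.ext hb
      rw [hb']; exact this
    · have h : b.val + 1 < n := by omega
      have := (halt b.val h).2 (by omega)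
      have ha : a = ⟨b.val + 1, h⟩ := Fin.ext hb
      rw [ha]; exact this

lemma bigdes_eq_des (n : ℕ) (u : Equiv.Perm (Fin n)) (halt : IsUpDownAlt u) :
    bigDesSetOf n ⇑u⁻¹ = desSetOf n ⇑(epsPerm n * u⁻¹) := by
  ext i
  simp only [bigDesSetOf, desSetOf, Set.mem_setOf_eq]
  constructor <;> rintro ⟨h, hlt⟩ <;> refine ⟨h, ?_⟩ <;>
  · set X := u⁻¹ ⟨i, Nat.lt_of_succ_lt h⟩ with hX
    set Y := u⁻¹ ⟨i + 1, h⟩ with hY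
    have hXY : X.val ≠ Y.val := by
      intro he
      have : (⟨i, Nat.lt_of_succ_lt h⟩ : Fin n) = ⟨i + 1, h⟩ := by
        have := Fin.ext he
        calc (⟨i, Nat.lt_of_succ_lt h⟩ : Fin n) = u X := by simp [hX]
          _ = u Y := by rw [this]
          _ = ⟨i + 1, h⟩ := by simp [hY]
      simpa using congrArg Fin.val this
    have huX : u X = ⟨i, Nat.lt_of_succ_lt h⟩ := by simp [hX]
    have huY : u Y = ⟨i + 1, h⟩ := by simp [hY]
    have hA : ¬(X.val = Y.val + 1 ∧ Y.val % 2 = 0) := by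
      rintro ⟨he, hp⟩
      have hYn : Y.val + 1 < n := he ▸ X.isLt
      have := (halt Y.val hYn).1 hp
      have e1 : (⟨Y.val, Nat.lt_of_succ_lt hYn⟩ : Fin n) = Y := rfl
      have e2 : (⟨Y.val + 1, hYn⟩ : Fin n) = X := Fin.ext he.symm
      rw [e1, e2, huX, huY] at this
      have : i + 1 < i := this
      omega
    have hB : ¬(Y.val = X.val + 1 ∧ X.val % 2 = 1) := by
      rintro ⟨he, hp⟩
      have hXn : X.val + 1 < n := he ▸ Y.isLt
      have := (halt X.val hXn).2 hp
      have e1 : (⟨X.val, Nat.lt_of_succ_lt hXn⟩ : Fin n) = X := rfl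
      have e2 : (⟨X.val + 1, hXn⟩ : Fin n) = Y := Fin.ext he.symm
      rw [e2, e1, huY, huX] at this
      have : i + 1 < i := this
      omega
    have hXn := X.isLt
    have hYn := Y.isLt
    revert hlt
    show _ → _
    simp only [Equiv.Perm.coe_mul, Function.comp_apply, epsPerm_apply, epsf, ← hX, ← hY,
      Fin.lt_def]
    split_ifs <;> omega

lemma epsPerm_mul_self (n : ℕ) : epsPerm n * epsPerm n = 1 := by
  ext x
  simp [epsPerm_epsPerm n x]

/-- the number of up-down alternating permutations of `S_n` with exactly `k`
big returns (big descents of the inverse) equals the number of linear extensions of the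
naturally labeled zig-zag poset `εZ_n` with exactly `k` descents. -/
theorem card_updown_bigret_eq_card_linext_des (n k : ℕ) :
    Set.ncard {u : Equiv.Perm (Fin n) |
        IsUpDownAlt u ∧ (bigDesSetOf n ⇑u⁻¹).ncard = k} =
    Set.ncard {π : Equiv.Perm (Fin n) |
        (∀ a b : Fin n, ZigZagCover n a b → π⁻¹ (epsPerm n a) < π⁻¹ (epsPerm n b)) ∧
        (desSetOf n ⇑π).ncard = k} := by
  have key : {π : Equiv.Perm (Fin n) |
        (∀ a b : Fin n, ZigZagCover n a b → π⁻¹ (epsPerm n a) < π⁻¹ (epsPerm n b)) ∧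
        (desSetOf n ⇑π).ncard = k} =
      (fun u : Equiv.Perm (Fin n) => epsPerm n * u⁻¹) ''
        {u : Equiv.Perm (Fin n) | IsUpDownAlt u ∧ (bigDesSetOf n ⇑u⁻¹).ncard = k} := by
    ext π
    simp only [Set.mem_setOf_eq, Set.mem_image]
    constructor
    · rintro ⟨h1, h2⟩
      have hπ : epsPerm n * (π⁻¹ * epsPerm n)⁻¹ = π := by
        rw [mul_inv_rev, inv_inv, epsPerm_inv, ← mul_assoc, epsPerm_mul_self, one_mul]
      have halt : IsUpDownAlt (π⁻¹ * epsPerm n) := by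
        rw [← linext_iff]
        rw [hπ]
        exact h1
      refine ⟨π⁻¹ * epsPerm n, ⟨halt, ?_⟩, hπ⟩
      rw [bigdes_eq_des n _ halt, hπ]
      exact h2
    · rintro ⟨u, ⟨hu, hk⟩, rfl⟩
      exact ⟨(linext_iff n u).mpr hu, by rw [← bigdes_eq_des n u hu]; exact hk⟩
  rw [key, Set.ncard_image_of_injective]
  intro a b hab
  have := mul_left_cancel hab
  exact inv_injective this
end

section
/- For each fixed m ≥ 2, the formal power series F_m(y) = Σ_{n≥0} Ω_n(m) yⁿ satisfies (2 − y² − y·F_{m−1}(y)) · F_m(y) = y + 2·F_{m−1}(y). -/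
/-- `f : [n] → {1,…,m}` is a zig-zag sequence: `f(1) ≤ f(2) ≥ f(3) ≤ f(4) ≥ ⋯`. -/
def IsZigZagSeq {n m : ℕ} (f : Fin n → Fin m) : Prop :=
  ∀ (i : ℕ) (h : i + 1 < n),
    (i % 2 = 0 → f ⟨i, Nat.lt_of_succ_lt h⟩ ≤ f ⟨i + 1, h⟩) ∧
    (i % 2 = 1 → f ⟨i + 1, h⟩ ≤ f ⟨i, Nat.lt_of_succ_lt h⟩)

/-- The zig-zag order polynomial `Ω_n(m)`: the number of zig-zag sequences of length `n`
with entries in `{1,…,m}`. In particular `Ω_0(m) = 1` and `Ω_n(0) = 0` for `n ≥ 1`. -/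
noncomputable def zzOmega (n m : ℕ) : ℕ :=
  Set.ncard {f : Fin n → Fin m | IsZigZagSeq f}

/-- The ordinary generating function `F_m(y) = Σ_{n≥0} Ω_n(m) yⁿ` in `ℚ[[y]]`. -/
noncomputable def zzF (m : ℕ) : PowerSeries ℚ :=
  PowerSeries.mk fun n => (zzOmega n m : ℚ)

/-!
Sort the zig-zag sequences with entries in `{1,…,m+1}` by the position of the first entry
equal to `m + 1`. If there is none, the sequence has entries in `{1,…,m}`. If it is `a₁`,
then `a₂ = m + 1` too and the rest is an arbitrary zig-zag sequence. Otherwise the position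
is even, `2i`, and the sequence splits into a zig-zag sequence of length `2i - 1` with
entries at most `m` and an arbitrary one. With `O_m` the odd part of `F_m` this reads
`F_{m+1} · u_m = y + F_m`, `u_m = 1 - y² - y·O_m`. As `u_m` is even, substituting `y ↦ -y`
and inducting on `m` give `F_m(y) F_m(-y) = 1 + y·O_m`, hence
`F_m(-y) F_{m+1}(y) = 1 + y·F_{m+1}(y)`; eliminating `F_m(-y) = F_m(y) - 2·O_m` from
`F_{m+1} · u_m = y + F_m` gives the recurrence.
-/

open Finset PowerSeries

namespace PowerSeries

variable {R : Type*} [CommRing R]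

noncomputable def oddPart (f : R⟦X⟧) : R⟦X⟧ :=
  mk fun n => if Odd n then coeff n f else 0

theorem coeff_oddPart (f : R⟦X⟧) (n : ℕ) :
    coeff n (oddPart f) = if Odd n then coeff n f else 0 :=
  coeff_mk _ _

@[simp]
theorem oddPart_one : oddPart (1 : R⟦X⟧) = 0 := by
  ext n
  rcases n with _ | n <;> simp [oddPart, coeff_one]

theorem rescale_neg_one_eq_sub_two_mul_oddPart (f : R⟦X⟧) :
    rescale (-1) f = f - 2 * oddPart f := by
  ext n
  rcases Nat.even_or_odd n with hn | hn
  · simp [two_mul, oddPart, coeff_rescale, hn.neg_one_pow, Nat.not_odd_iff_even.mpr hn]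
  · simp [two_mul, oddPart, coeff_rescale, hn.neg_one_pow, hn]

theorem rescale_neg_one_oddPart (f : R⟦X⟧) : rescale (-1) (oddPart f) = -oddPart f := by
  ext n
  rcases Nat.even_or_odd n with hn | hn
  · simp [oddPart, coeff_rescale, Nat.not_odd_iff_even.mpr hn]
  · simp [oddPart, coeff_rescale, hn.neg_one_pow, hn]

theorem isUnit_one_sub_X_sq_sub_X_mul (f : R⟦X⟧) : IsUnit (1 - X ^ 2 - X * f) :=
  isUnit_iff_constantCoeff.2 (by simp)

variable {F G : R⟦X⟧}

theorem mul_rescale_neg_one_of_mul_eq [IsDomain R] [NeZero (2 : R)]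
    (hF : F * rescale (-1) F = 1 + X * oddPart F)
    (hG : G * (1 - X ^ 2 - X * oddPart F) = X + F) :
    G * rescale (-1) G = 1 + X * oddPart G := by
  have hσF := rescale_neg_one_eq_sub_two_mul_oddPart F
  have hσG := rescale_neg_one_eq_sub_two_mul_oddPart G
  have hGσ : rescale (-1) G * (1 - X ^ 2 - X * oddPart F) = rescale (-1) F - X := by
    simpa [rescale_neg_one_X, rescale_neg_one_oddPart, sub_eq_add_neg, add_comm]
      using congrArg (rescale (-1 : R)) hG
  have h2 : (2 : R⟦X⟧) ≠ 0 :=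
    fun h => two_ne_zero (α := R) (by simpa [map_ofNat] using congrArg constantCoeff h)
  have hOG : oddPart G * (1 - X ^ 2 - X * oddPart F) = X + oddPart F :=
    mul_left_cancel₀ h2 <| by
      linear_combination (1 - X ^ 2 - X * oddPart F) * hσG - hGσ + hG - hσF
  refine ((isUnit_one_sub_X_sq_sub_X_mul (oddPart F)).pow 2).mul_left_inj.1 ?_
  linear_combination (rescale (-1) G * (1 - X ^ 2 - X * oddPart F)) * hG + (X + F) * hGσ + hF
    + X * hσF - X * (1 - X ^ 2 - X * oddPart F) * hOG

theorem rescale_neg_one_mul_of_mul_eq (hF : F * rescale (-1) F = 1 + X * oddPart F)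
    (hG : G * (1 - X ^ 2 - X * oddPart F) = X + F) :
    rescale (-1) F * G = 1 + X * G := by
  refine (isUnit_one_sub_X_sq_sub_X_mul (oddPart F)).mul_left_inj.1 ?_
  linear_combination (rescale (-1) F - X) * hG + hF + X * rescale_neg_one_eq_sub_two_mul_oddPart F

theorem two_sub_X_sq_sub_X_mul_mul_of_mul_eq (hF : F * rescale (-1) F = 1 + X * oddPart F)
    (hG : G * (1 - X ^ 2 - X * oddPart F) = X + F) :
    (2 - X ^ 2 - X * F) * G = X + 2 * F := by
  linear_combination 2 * hG - X * rescale_neg_one_mul_of_mul_eq hF hG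
    + X * G * rescale_neg_one_eq_sub_two_mul_oddPart F

end PowerSeries

namespace Fin

variable {α : Type*} {a b : ℕ}

theorem append_snoc_apply (q : Fin a → α) (x : α) (s : Fin b → α) (i : ℕ)
    (hi : i < a + 1 + b) :
    append (snoc q x) s ⟨i, hi⟩ =
      if h : i < a then q ⟨i, h⟩
      else if _ : i = a then x else s ⟨i - (a + 1), by omega⟩ := by
  simp only [append, addCases, snoc, castLT_mk, eq_rec_constant]
  split_ifs <;> first | rfl | omega

theorem eq_append_snoc (f : Fin (a + 1 + b) → α) :
    f = append (snoc (fun i : Fin a => f ⟨i, by omega⟩) (f ⟨a, by omega⟩))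
      (fun i : Fin b => f ⟨a + 1 + i, by omega⟩) := by
  funext ⟨i, hi⟩
  rw [append_snoc_apply]
  split_ifs with h₁ h₂
  · rfl
  · simp only [h₂]
  · exact congrArg f (Fin.ext (by simp; omega))

theorem append_snoc_inj {q q' : Fin a → α} {x : α} {s s' : Fin b → α} :
    append (snoc q x) s = append (snoc q' x) s' ↔ q = q' ∧ s = s' := by
  refine ⟨fun h => ?_, fun ⟨hq, hs⟩ => hq ▸ hs ▸ rfl⟩
  have hl : snoc q x = snoc q' x := funext fun i => by simpa using congrFun h (castAdd b i)
  exact ⟨(snoc_injective2 hl).1, funext fun i => by simpa using congrFun h (natAdd _ i)⟩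

end Fin

section ZigZag

variable {n m j k : ℕ}

theorem isZigZagSeq_comp_iff {m' : ℕ} {e : Fin m → Fin m'} (he : StrictMono e)
    (f : Fin n → Fin m) : IsZigZagSeq (e ∘ f) ↔ IsZigZagSeq f := by
  simp only [IsZigZagSeq, Function.comp_apply, he.le_iff_le]

theorem isZigZagSeq_append_snoc_last_iff {a b : ℕ} (ha : Odd a) (q : Fin a → Fin (m + 1))
    (s : Fin b → Fin (m + 1)) :
    IsZigZagSeq (Fin.append (Fin.snoc q (Fin.last m)) s) ↔ IsZigZagSeq q ∧ IsZigZagSeq s := by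
  obtain ⟨c, rfl⟩ := ha
  simp only [IsZigZagSeq, Fin.append_snoc_apply]
  refine ⟨fun h => ⟨fun i hi => ?_, fun i hi => ?_⟩, fun ⟨hq, hs⟩ i hi => ?_⟩
  · simpa [show i < 2 * c + 1 by omega, hi] using h i (by omega)
  · have h' := h (2 * c + 2 + i) (by omega)
    simp only [dif_neg (show ¬2 * c + 2 + i < 2 * c + 1 by omega),
      dif_neg (show ¬2 * c + 2 + i + 1 < 2 * c + 1 by omega),
      dif_neg (show 2 * c + 2 + i ≠ 2 * c + 1 by omega),
      dif_neg (show 2 * c + 2 + i + 1 ≠ 2 * c + 1 by omega)] at h'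
    exact ⟨fun _ => by convert h'.1 (by omega) using 3 <;> omega,
      fun _ => by convert h'.2 (by omega) using 3 <;> omega⟩
  · rcases lt_trichotomy (i + 1) (2 * c + 1) with hlt | heq | hgt
    · simpa [hlt, show i < 2 * c + 1 by omega] using hq i hlt
    · simp [heq, show i < 2 * c + 1 by omega, Fin.le_last]
      omega
    · rcases (show i = 2 * c + 1 ∨ 2 * c + 1 < i by omega) with rfl | hgt'
      · simp [Fin.le_last]
      · have h' := hs (i - (2 * c + 2)) (by omega)
        simp only [dif_neg (show ¬i < 2 * c + 1 by omega),
          dif_neg (show ¬i + 1 < 2 * c + 1 by omega),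
          dif_neg (show i ≠ 2 * c + 1 by omega),
          dif_neg (show i + 1 ≠ 2 * c + 1 by omega)]
        exact ⟨fun _ => by convert h'.1 (by omega) using 3; omega,
          fun _ => by convert h'.2 (by omega) using 3; omega⟩

/-- The (0-based) index of the first entry equal to `Fin.last m`, or `n` if there is none. -/
noncomputable def firstTop (f : Fin n → Fin (m + 1)) : ℕ :=
  Nat.find (p := fun j => ∀ h : j < n, f ⟨j, h⟩ = Fin.last m)
    ⟨n, fun h => absurd h n.lt_irrefl⟩

theorem firstTop_le (f : Fin n → Fin (m + 1)) : firstTop f ≤ n :=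
  Nat.find_min' _ fun h => absurd h n.lt_irrefl

theorem firstTop_eq_iff_of_lt (hj : j < n) (f : Fin n → Fin (m + 1)) :
    firstTop f = j ↔
      f ⟨j, hj⟩ = Fin.last m ∧ ∀ i : Fin n, (i : ℕ) < j → f i ≠ Fin.last m := by
  rw [firstTop, Nat.find_eq_iff]
  refine and_congr ⟨fun h => h hj, fun h _ => h⟩ ⟨fun h i hi hf => h i hi fun _ => hf, ?_⟩
  rintro h i hi hf
  exact h ⟨i, by omega⟩ hi (hf _)

theorem firstTop_eq_length_iff (f : Fin n → Fin (m + 1)) :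
    firstTop f = n ↔ ∀ i, f i ≠ Fin.last m := by
  rw [firstTop, Nat.find_eq_iff]
  simp only [lt_self_iff_false, IsEmpty.forall_iff, true_and]
  exact ⟨fun h i hf => h i i.isLt fun _ => hf, fun h i hi hf => h ⟨i, hi⟩ (hf hi)⟩

theorem ncard_firstTop_eq_length :
    {f : Fin n → Fin (m + 1) | IsZigZagSeq f ∧ firstTop f = n}.ncard = zzOmega n m := by
  have : {f : Fin n → Fin (m + 1) | IsZigZagSeq f ∧ firstTop f = n} =
      (Fin.castSucc ∘ ·) '' {g | IsZigZagSeq g} := by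
    ext f
    simp only [Set.mem_ofPred_eq, Set.mem_image, firstTop_eq_length_iff]
    constructor
    · rintro ⟨hf, htop⟩
      have hg : Fin.castSucc ∘ (fun i => (f i).castPred (htop i)) = f :=
        funext fun i => Fin.castSucc_castPred _ _
      exact ⟨_, (isZigZagSeq_comp_iff Fin.strictMono_castSucc _).1 (by rwa [hg]), hg⟩
    · rintro ⟨g, hg, rfl⟩
      exact ⟨(isZigZagSeq_comp_iff Fin.strictMono_castSucc g).2 hg,
        fun i => (Fin.castSucc_lt_last _).ne⟩
  rw [this, Set.ncard_image_of_injective _ (Fin.castSucc_injective m).comp_left]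
  rfl

theorem ncard_firstTop_eq_zero_of_length_eq_one :
    {f : Fin 1 → Fin (m + 1) | IsZigZagSeq f ∧ firstTop f = 0}.ncard = 1 := by
  rw [Set.ncard_eq_one]
  refine ⟨fun _ => Fin.last m, Set.ext fun f => ?_⟩
  simp only [Set.mem_ofPred_eq, Set.mem_singleton_iff, firstTop_eq_iff_of_lt Nat.one_pos]
  refine ⟨fun ⟨_, h, _⟩ => funext fun i => by rwa [Subsingleton.elim i ⟨0, Nat.one_pos⟩],
    ?_⟩
  rintro rfl
  exact ⟨fun i h => absurd h (by omega), rfl, fun i hi => absurd hi (by omega)⟩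

theorem ncard_firstTop_eq_zero (hn : n = 1 + 1 + k) :
    {f : Fin n → Fin (m + 1) | IsZigZagSeq f ∧ firstTop f = 0}.ncard = zzOmega k (m + 1) := by
  subst hn
  have hq : IsZigZagSeq (fun _ : Fin 1 => Fin.last m) := fun i h => absurd h (by omega)
  have : {f : Fin (1 + 1 + k) → Fin (m + 1) | IsZigZagSeq f ∧ firstTop f = 0} =
      Fin.append (Fin.snoc (fun _ => Fin.last m) (Fin.last m)) '' {s | IsZigZagSeq s} := by
    ext f
    simp only [Set.mem_ofPred_eq, Set.mem_image, firstTop_eq_iff_of_lt (by omega : 0 < 1 + 1 + k),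
      Nat.not_lt_zero, IsEmpty.forall_iff, implies_true, and_true]
    constructor
    · rintro ⟨hf, h₀⟩
      have h₁ : f ⟨1, by omega⟩ = Fin.last m :=
        Fin.last_le_iff.1 (h₀ ▸ (hf 0 (by omega)).1 rfl)
      have hq' : (fun i : Fin 1 => f ⟨i, by omega⟩) = fun _ => Fin.last m :=
        funext fun i => by rwa [Subsingleton.elim i 0]
      rw [Fin.eq_append_snoc f, hq', h₁] at hf ⊢
      exact ⟨_, ((isZigZagSeq_append_snoc_last_iff odd_one _ _).1 hf).2, rfl⟩
    · rintro ⟨s, hs, rfl⟩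
      exact ⟨(isZigZagSeq_append_snoc_last_iff odd_one _ _).2 ⟨hq, hs⟩,
        by rw [Fin.append_snoc_apply]; rfl⟩
  rw [this, Set.ncard_image_of_injective _ fun s s' h => (Fin.append_snoc_inj.1 h).2]
  rfl

theorem ncard_firstTop_eq_of_odd (hj : Odd j) (hn : n = j + 1 + k) :
    {f : Fin n → Fin (m + 1) | IsZigZagSeq f ∧ firstTop f = j}.ncard =
      zzOmega j m * zzOmega k (m + 1) := by
  subst hn
  have : {f : Fin (j + 1 + k) → Fin (m + 1) | IsZigZagSeq f ∧ firstTop f = j} =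
      (fun x => Fin.append (Fin.snoc (Fin.castSucc ∘ x.1) (Fin.last m)) x.2) ''
        ({p | IsZigZagSeq p} ×ˢ {s | IsZigZagSeq s}) := by
    ext f
    simp only [Set.mem_ofPred_eq, Set.mem_image, Set.mem_prod, Prod.exists,
      firstTop_eq_iff_of_lt (by omega : j < j + 1 + k)]
    constructor
    · rintro ⟨hf, htop, hbefore⟩
      have hp : Fin.castSucc ∘ (fun i : Fin j => (f ⟨i, by omega⟩).castPred
          (hbefore ⟨i, by omega⟩ i.isLt)) = fun i : Fin j => f ⟨i, by omega⟩ :=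
        funext fun i => Fin.castSucc_castPred _ _
      rw [Fin.eq_append_snoc f, ← hp, htop] at hf ⊢
      obtain ⟨hp', hs⟩ := (isZigZagSeq_append_snoc_last_iff hj _ _).1 hf
      exact ⟨_, _, ⟨(isZigZagSeq_comp_iff Fin.strictMono_castSucc _).1 hp', hs⟩, rfl⟩
    · rintro ⟨p, s, ⟨hp, hs⟩, rfl⟩
      refine ⟨(isZigZagSeq_append_snoc_last_iff hj _ _).2
        ⟨(isZigZagSeq_comp_iff Fin.strictMono_castSucc _).2 hp, hs⟩,
        by simp [Fin.append_snoc_apply], fun i hi => ?_⟩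
      rw [← Fin.eta i i.isLt, Fin.append_snoc_apply, dif_pos hi]
      exact (Fin.castSucc_lt_last _).ne
  rw [this, Set.ncard_image_of_injective _ fun x y h => ?_, Set.ncard_prod]
  · rfl
  obtain ⟨hp, hs⟩ := Fin.append_snoc_inj.1 h
  exact Prod.ext ((Fin.castSucc_injective m).comp_left hp) hs

theorem ncard_firstTop_eq_of_even (hj₀ : j ≠ 0) (hj : Even j) (hjn : j < n) :
    {f : Fin n → Fin (m + 1) | IsZigZagSeq f ∧ firstTop f = j}.ncard = 0 := by
  refine (Set.ncard_eq_zero).2 (Set.eq_empty_of_forall_notMem fun f ⟨hf, hfj⟩ => ?_)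
  obtain ⟨htop, hbefore⟩ := (firstTop_eq_iff_of_lt hjn f).1 hfj
  have h := (hf (j - 1) (by omega)).2 (by obtain ⟨c, rfl⟩ := hj; omega)
  simp only [Nat.sub_add_cancel (Nat.pos_of_ne_zero hj₀), htop, Fin.last_le_iff] at h
  exact hbefore _ (by simp; omega) h

end ZigZag

theorem zzOmega_zero (m : ℕ) : zzOmega 0 m = 1 := by
  rw [zzOmega, Set.ncard_eq_one]
  exact ⟨finZeroElim, Set.ext fun f => by simp [Subsingleton.elim f finZeroElim, IsZigZagSeq]⟩

theorem zzOmega_succ_zero (n : ℕ) : zzOmega (n + 1) 0 = 0 := by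
  rw [zzOmega, Set.ncard_eq_zero]
  exact Set.eq_empty_of_isEmpty _

theorem zzOmega_eq_sum_ncard_firstTop (n m : ℕ) :
    zzOmega n (m + 1) = ∑ j ∈ range (n + 1),
      {f : Fin n → Fin (m + 1) | IsZigZagSeq f ∧ firstTop f = j}.ncard := by
  classical
  simp only [zzOmega, Set.ncard_eq_toFinset_card']
  rw [card_eq_sum_card_fiberwise (f := firstTop) (t := range (n + 1))
    fun f _ => mem_range.2 (Nat.lt_succ_of_le (firstTop_le f))]
  refine sum_congr rfl fun j _ => ?_
  congr 1
  ext f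
  simp

theorem zzOmega_succ_succ (n m : ℕ) :
    zzOmega (n + 1) (m + 1) = zzOmega (n + 1) m + (if n = 0 then 1 else zzOmega (n - 1) (m + 1)) +
      ∑ j ∈ range (n + 1), if Odd j then zzOmega j m * zzOmega (n - j) (m + 1) else 0 := by
  rw [zzOmega_eq_sum_ncard_firstTop, sum_range_succ, sum_range_succ', sum_range_succ',
    ncard_firstTop_eq_length, if_neg (by decide : ¬Odd 0), add_zero]
  have hzero : {f : Fin (n + 1) → Fin (m + 1) | IsZigZagSeq f ∧ firstTop f = 0}.ncard =
      if n = 0 then 1 else zzOmega (n - 1) (m + 1) := by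
    rcases n with _ | n
    · exact ncard_firstTop_eq_zero_of_length_eq_one
    · exact ncard_firstTop_eq_zero (by omega)
  have hpos : ∀ j ∈ range n,
      {f : Fin (n + 1) → Fin (m + 1) | IsZigZagSeq f ∧ firstTop f = j + 1}.ncard =
        if Odd (j + 1) then zzOmega (j + 1) m * zzOmega (n - (j + 1)) (m + 1) else 0 := by
    intro j hj
    rw [mem_range] at hj
    split_ifs with hodd
    · exact ncard_firstTop_eq_of_odd hodd (by omega)
    · exact ncard_firstTop_eq_of_even (by omega) (Nat.not_odd_iff_even.1 hodd) (by omega)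
  rw [hzero, sum_congr rfl hpos]
  ring

theorem zzF_zero : zzF 0 = 1 := by
  ext n
  rcases n with _ | n <;> simp [zzF, coeff_one, zzOmega_zero, zzOmega_succ_zero]

theorem zzF_succ_mul (m : ℕ) :
    zzF (m + 1) * (1 - X ^ 2 - X * oddPart (zzF m)) = X + zzF m := by
  suffices h : zzF (m + 1) =
      zzF m + X + X ^ 2 * zzF (m + 1) + X * (oddPart (zzF m) * zzF (m + 1)) by
    linear_combination h
  ext n
  rcases n with _ | n
  · simp [zzF, zzOmega_zero]
  · rw [map_add, map_add, map_add, coeff_succ_X_mul, coeff_X_pow_mul', coeff_X, coeff_mul,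
      Nat.sum_antidiagonal_eq_sum_range_succ_mk]
    simp only [zzF, coeff_mk, coeff_oddPart, zzOmega_succ_succ]
    rcases n with _ | n <;> simp [ite_mul]

theorem zzF_mul_rescale_neg_one (m : ℕ) :
    zzF m * rescale (-1) (zzF m) = 1 + X * oddPart (zzF m) := by
  induction m with
  | zero => simp [zzF_zero]
  | succ m ih => exact mul_rescale_neg_one_of_mul_eq ih (zzF_succ_mul m)

/-- for `m ≥ 2`, `(2 - y² - y·F_{m-1}(y)) · F_m(y) = y + 2·F_{m-1}(y)`. -/
theorem zzF_rec_pos (m : ℕ) (hm : 2 ≤ m) :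
    (2 - PowerSeries.X ^ 2 - PowerSeries.X * zzF (m - 1)) * zzF m =
      PowerSeries.X + 2 * zzF (m - 1) := by
  obtain ⟨k, rfl⟩ : ∃ k, m = k + 1 := ⟨m - 1, by omega⟩
  exact two_sub_X_sq_sub_X_mul_mul_of_mul_eq (zzF_mul_rescale_neg_one k) (zzF_succ_mul k)
end
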